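/- arXiv:2507.13887 — 3 statements merged into one kernel-verified Lean document; each statement's English description precedes it below -/
import Mathlib

section
/- For every n ≥ 1 and any pairwise distinct points x₁, …, xₙ ∈ ℝ^N, the symmetric n×n real matrix Z with entries Z_{ij} = exp(−‖x_i − x_j‖) is positive definite; in particular Z is invertible. -/
/-!
For `a ≥ 0` one has the subordination formula
`exp (-a) = 2 / √π * ∫₀^∞ exp (-u²) exp (-a² / (4u²)) du`,
obtained by completing the square and the substitutions `u ↦ u - c / u` and `u ↦ c / u`.
So `Z` is a positive mixture of the Gaussian kernel matrices `exp (-s ‖xᵢ - xⱼ‖²)`, `s = 1 / (4u²)`.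
These are positive semidefinite: up to a positive diagonal scaling they are the entrywise
exponential of `2s` times a Gram matrix, a convergent series of Hadamard powers of a positive
semidefinite matrix (Schur product theorem). Since the points are distinct, the Gaussian kernel
matrices tend to the identity as `u → 0`, so for `v ≠ 0` the integrand of `vᵀ Z v` is positive
near `0`, and the integral is positive.
-/

open MeasureTheory Real Set Filter Topology Matrix
open scoped Nat ComplexOrder

section Substitution

variable {E : Type*} [NormedAddCommGroup E] [NormedSpace ℝ E] {c : ℝ}

lemma hasDerivAt_const_div (c : ℝ) {u : ℝ} (hu : u ≠ 0) :
    HasDerivAt (fun u : ℝ => c / u) (-(c / u ^ 2)) u := by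
  simpa [div_eq_mul_inv, sq] using (hasDerivAt_inv hu).const_mul c

lemma hasDerivWithinAt_const_div_Ioi {u : ℝ} (hu : u ∈ Ioi 0) :
    HasDerivWithinAt (fun u => c / u) (-(c / u ^ 2)) (Ioi 0) u :=
  (hasDerivAt_const_div c (ne_of_gt hu)).hasDerivWithinAt

lemma image_const_div_Ioi (hc : 0 < c) : (fun u : ℝ => c / u) '' Ioi 0 = Ioi 0 := by
  ext y
  refine ⟨?_, fun hy => ⟨c / y, div_pos hc hy, div_div_cancel₀ hc.ne'⟩⟩
  rintro ⟨u, hu, rfl⟩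
  exact div_pos hc hu

lemma injOn_const_div_Ioi (hc : 0 < c) : InjOn (fun u : ℝ => c / u) (Ioi 0) :=
  fun a _ b _ hab => by
    simp only at hab
    rwa [div_eq_mul_inv, div_eq_mul_inv, mul_right_inj' hc.ne', _root_.inv_inj] at hab

lemma strictMonoOn_sub_const_div (hc : 0 < c) : StrictMonoOn (fun u : ℝ => u - c / u) (Ioi 0) :=
  fun _ ha _ _ hab => sub_lt_sub hab (div_lt_div_of_pos_left hc ha hab)

lemma image_sub_const_div_Ioi (hc : 0 < c) : (fun u : ℝ => u - c / u) '' Ioi 0 = univ := by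
  refine eq_univ_of_forall fun t => ?_
  set r := √(t ^ 2 + 4 * c)
  have hr : r ^ 2 = t ^ 2 + 4 * c := sq_sqrt (by positivity)
  have ht : |t| < r := by
    rw [← sqrt_sq_eq_abs]; exact sqrt_lt_sqrt (sq_nonneg t) (by linarith)
  -- `u` is the positive root of `u ^ 2 - t u - c = 0`
  have hu : 0 < (t + r) / 2 := by linarith [neg_abs_le t]
  refine ⟨(t + r) / 2, hu, ?_⟩
  have hne : t + r ≠ 0 := by linarith
  field_simp
  linear_combination hr

lemma integral_Ioi_comp_const_div (hc : 0 < c) (f : ℝ → E) :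
    ∫ u in Ioi (0 : ℝ), (c / u ^ 2) • f (c / u) = ∫ u in Ioi 0, f u := by
  conv_rhs => rw [← image_const_div_Ioi hc,
    integral_image_eq_integral_abs_deriv_smul measurableSet_Ioi
      (fun u => hasDerivWithinAt_const_div_Ioi) (injOn_const_div_Ioi hc)]
  refine setIntegral_congr_fun measurableSet_Ioi fun u hu => ?_
  rw [abs_neg, abs_of_pos (div_pos hc (pow_pos hu 2))]

lemma integrableOn_Ioi_comp_const_div_iff (hc : 0 < c) (f : ℝ → E) :
    IntegrableOn (fun u => (c / u ^ 2) • f (c / u)) (Ioi 0) ↔ IntegrableOn f (Ioi 0) := by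
  conv_rhs => rw [← image_const_div_Ioi hc]
  rw [integrableOn_image_iff_integrableOn_abs_deriv_smul measurableSet_Ioi
      (fun u => hasDerivWithinAt_const_div_Ioi)
    (injOn_const_div_Ioi hc)]
  refine integrableOn_congr_fun (fun u hu => ?_) measurableSet_Ioi
  rw [abs_neg, abs_of_pos (div_pos hc (pow_pos hu 2))]

lemma hasDerivWithinAt_sub_const_div_Ioi {u : ℝ} (hu : u ∈ Ioi 0) :
    HasDerivWithinAt (fun u => u - c / u) (1 + c / u ^ 2) (Ioi 0) u := by
  simpa using ((hasDerivAt_id' u).fun_sub (hasDerivAt_const_div c (ne_of_gt hu))).hasDerivWithinAt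

lemma integral_Ioi_comp_sub_const_div (hc : 0 < c) (f : ℝ → E) :
    ∫ u in Ioi (0 : ℝ), (1 + c / u ^ 2) • f (u - c / u) = ∫ t, f t := by
  conv_rhs => rw [← setIntegral_univ, ← image_sub_const_div_Ioi hc,
    integral_image_eq_integral_abs_deriv_smul measurableSet_Ioi
      (fun u => hasDerivWithinAt_sub_const_div_Ioi) (strictMonoOn_sub_const_div hc).injOn]
  refine setIntegral_congr_fun measurableSet_Ioi fun u hu => ?_
  rw [abs_of_pos (by have : 0 < c / u ^ 2 := div_pos hc (pow_pos hu 2); linarith)]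

lemma integrableOn_Ioi_comp_sub_const_div_iff (hc : 0 < c) (f : ℝ → E) :
    IntegrableOn (fun u => (1 + c / u ^ 2) • f (u - c / u)) (Ioi 0) ↔ Integrable f := by
  rw [← integrableOn_univ, ← image_sub_const_div_Ioi hc,
    integrableOn_image_iff_integrableOn_abs_deriv_smul measurableSet_Ioi
      (fun u => hasDerivWithinAt_sub_const_div_Ioi) (strictMonoOn_sub_const_div hc).injOn]
  refine integrableOn_congr_fun (fun u hu => ?_) measurableSet_Ioi
  rw [abs_of_pos (by have : 0 < c / u ^ 2 := div_pos hc (pow_pos hu 2); linarith)]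

end Substitution

lemma integral_exp_neg_sq_sub_const_div {c : ℝ} (hc : 0 ≤ c) :
    ∫ u in Ioi (0 : ℝ), exp (-(u - c / u) ^ 2) = √π / 2 := by
  rcases hc.eq_or_lt with rfl | hc
  · simpa using integral_gaussian_Ioi 1
  set h : ℝ → ℝ := fun u => exp (-(u - c / u) ^ 2)
  have h_comp_div : ∀ u ∈ Ioi (0 : ℝ), h (c / u) = h u := fun u hu => by
    simp only [h, div_div_cancel₀ hc.ne']
    ring_nf
  have hweight : IntegrableOn (fun u => (1 + c / u ^ 2) * h u) (Ioi 0) :=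
    (integrableOn_Ioi_comp_sub_const_div_iff hc _).2
      (by simpa using integrable_exp_neg_mul_sq one_pos)
  have hmeas : Measurable h := by fun_prop
  have hint : IntegrableOn h (Ioi 0) := by
    refine hweight.mono' hmeas.aestronglyMeasurable ((ae_restrict_iff' measurableSet_Ioi).2
      (ae_of_all _ fun u hu => ?_))
    rw [norm_of_nonneg (exp_pos _).le]
    have : 0 ≤ c / u ^ 2 := by positivity
    nlinarith [exp_pos (-(u - c / u) ^ 2)]
  have hint' : IntegrableOn (fun u => c / u ^ 2 * h u) (Ioi 0) := by
    refine ((integrableOn_Ioi_comp_const_div_iff hc h).2 hint).congr_fun (fun u hu => ?_)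
      measurableSet_Ioi
    simp only [smul_eq_mul, h_comp_div u hu]
  have hsym : ∫ u in Ioi (0 : ℝ), c / u ^ 2 * h u = ∫ u in Ioi (0 : ℝ), h u := by
    rw [← integral_Ioi_comp_const_div hc h]
    exact setIntegral_congr_fun measurableSet_Ioi fun u hu => by rw [smul_eq_mul, h_comp_div u hu]
  have : √π = 2 * ∫ u in Ioi (0 : ℝ), h u := calc
    √π = ∫ t : ℝ, exp (-t ^ 2) := by simpa using (integral_gaussian 1).symm
    _ = ∫ u in Ioi (0 : ℝ), (1 + c / u ^ 2) * h u := (integral_Ioi_comp_sub_const_div hc _).symm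
    _ = (∫ u in Ioi (0 : ℝ), h u) + ∫ u in Ioi (0 : ℝ), c / u ^ 2 * h u := by
      simp_rw [add_mul, one_mul]
      exact integral_add hint hint'
    _ = 2 * ∫ u in Ioi (0 : ℝ), h u := by rw [hsym]; ring
  linarith

lemma exp_neg_eq_integral {a : ℝ} (ha : 0 ≤ a) :
    exp (-a) = 2 / √π * ∫ u in Ioi (0 : ℝ), exp (-u ^ 2) * exp (-((4 * u ^ 2)⁻¹ * a ^ 2)) := by
  -- completing the square: `u ^ 2 + a ^ 2 / (4 u ^ 2) = (u - (a / 2) / u) ^ 2 + a`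
  have hsq : ∀ u ∈ Ioi (0 : ℝ), exp (-u ^ 2) * exp (-((4 * u ^ 2)⁻¹ * a ^ 2)) =
      exp (-a) * exp (-(u - a / 2 / u) ^ 2) := fun u hu => by
    rw [← exp_add, ← exp_add]
    congr 1
    field_simp [(ne_of_gt hu : u ≠ 0)]
    ring
  rw [setIntegral_congr_fun measurableSet_Ioi hsq, integral_const_mul,
    integral_exp_neg_sq_sub_const_div (by positivity : 0 ≤ a / 2)]
  field_simp

lemma integrable_exp_neg_sq_mul_exp_neg (a : ℝ) :
    Integrable fun u : ℝ => exp (-u ^ 2) * exp (-((4 * u ^ 2)⁻¹ * a ^ 2)) := by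
  refine (by simpa using integrable_exp_neg_mul_sq one_pos : Integrable fun u : ℝ => exp (-u ^ 2))
    |>.mul_bdd (c := 1) (by fun_prop) (ae_of_all _ fun u => ?_)
  rw [norm_of_nonneg (exp_pos _).le, exp_le_one_iff, neg_nonpos]
  positivity

lemma setIntegral_Ioi_pos_of_tendsto_nhdsGT {f : ℝ → ℝ} {a L : ℝ} (hint : IntegrableOn f (Ioi a))
    (hnn : ∀ u ∈ Ioi a, 0 ≤ f u) (hf : Tendsto f (𝓝[>] a) (𝓝 L)) (hL : 0 < L) :
    0 < ∫ u in Ioi a, f u := by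
  obtain ⟨b, hab, hpos⟩ := mem_nhdsGT_iff_exists_Ioo_subset.1 (hf.eventually (lt_mem_nhds hL))
  rw [setIntegral_pos_iff_support_of_nonneg_ae
    ((ae_restrict_iff' measurableSet_Ioi).2 (ae_of_all _ hnn)) hint]
  calc (0 : ENNReal) < volume (Ioo a b) := by simpa using hab
    _ ≤ volume (Function.support f ∩ Ioi a) :=
      measure_mono fun u hu => ⟨(hpos hu).ne', hu.1⟩

lemma tendsto_inv_four_mul_sq_nhdsGT_zero :
    Tendsto (fun u : ℝ => (4 * u ^ 2)⁻¹) (𝓝[>] 0) atTop := by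
  refine tendsto_inv_nhdsGT_zero.comp (tendsto_nhdsWithin_iff.2 ⟨?_, ?_⟩)
  · exact ((by fun_prop : Continuous fun u : ℝ => 4 * u ^ 2).tendsto' 0 0 (by simp)).mono_left
      nhdsWithin_le_nhds
  · exact eventually_nhdsWithin_of_forall fun u (hu : 0 < u) => mem_Ioi.2 (by positivity)

namespace Matrix

variable {ι α : Type*} [Fintype ι] [MeasurableSpace α] {μ : Measure α}

lemma dotProduct_mulVec_eq_sum_sum {R : Type*} [CommSemiring R] (M : Matrix ι ι R) (v w : ι → R) :
    v ⬝ᵥ (M *ᵥ w) = ∑ i, ∑ j, v i * M i j * w j := by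
  simp only [dotProduct, mulVec, Finset.mul_sum, mul_assoc]

lemma PosSemidef.map_pow {𝕜 : Type*} [RCLike 𝕜] {A : Matrix ι ι 𝕜} (hA : A.PosSemidef) (k : ℕ) :
    (A.map (· ^ k)).PosSemidef := by
  induction k with
  | zero =>
    convert posSemidef_vecMulVec_self_star (fun _ : ι => (1 : 𝕜))
    ext i j
    simp [vecMulVec]
  | succ k ih =>
    convert ih.hadamard hA using 1
    ext i j
    simp [pow_succ]

lemma PosSemidef.map_exp {A : Matrix ι ι ℝ} (hA : A.PosSemidef) : (A.map exp).PosSemidef := by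
  refine .of_dotProduct_mulVec_nonneg (hA.isHermitian.map _ fun _ => rfl) fun v => ?_
  have hsum : HasSum (fun k : ℕ => (k ! : ℝ)⁻¹ * (star v ⬝ᵥ (A.map (· ^ k) *ᵥ v)))
      (star v ⬝ᵥ (A.map exp *ᵥ v)) := by
    simp only [dotProduct_mulVec_eq_sum_sum, Finset.mul_sum, star_trivial, map_apply]
    refine hasSum_sum fun i _ => hasSum_sum fun j _ => ?_
    have hexp := ((NormedSpace.expSeries_div_hasSum_exp (A i j)).mul_left (v i)).mul_right (v j)
    rw [← Real.exp_eq_exp_ℝ] at hexp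
    have hterm : (fun k : ℕ => (k ! : ℝ)⁻¹ * (v i * A i j ^ k * v j)) =
        fun k => v i * (A i j ^ k / k !) * v j := by
      funext k
      ring
    rwa [hterm]
  exact hsum.nonneg fun k => mul_nonneg (by positivity) ((hA.map_pow k).dotProduct_mulVec_nonneg v)

lemma integrable_dotProduct_mulVec {F : α → Matrix ι ι ℝ}
    (hF : ∀ i j, Integrable (fun a => F a i j) μ) (v w : ι → ℝ) :
    Integrable (fun a => v ⬝ᵥ (F a *ᵥ w)) μ := by
  simp only [dotProduct_mulVec_eq_sum_sum]
  exact integrable_finsetSum _ fun i _ => integrable_finsetSum _ fun j _ =>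
    ((hF i j).const_mul (v i)).mul_const (w j)

lemma dotProduct_mulVec_integral {F : α → Matrix ι ι ℝ}
    (hF : ∀ i j, Integrable (fun a => F a i j) μ) (v w : ι → ℝ) :
    v ⬝ᵥ ((of fun i j => ∫ a, F a i j ∂μ) *ᵥ w) = ∫ a, v ⬝ᵥ (F a *ᵥ w) ∂μ := by
  simp only [dotProduct_mulVec_eq_sum_sum, of_apply]
  rw [integral_finsetSum _ fun i _ => integrable_finsetSum _ fun j _ =>
    ((hF i j).const_mul (v i)).mul_const (w j)]
  refine Finset.sum_congr rfl fun i _ => ?_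
  rw [integral_finsetSum _ fun j _ => ((hF i j).const_mul (v i)).mul_const (w j)]
  refine Finset.sum_congr rfl fun j _ => ?_
  rw [integral_mul_const, integral_const_mul]

end Matrix

section GaussianKernel

noncomputable def gaussianKernelMatrix {E ι : Type*} [PseudoMetricSpace E] (s : ℝ) (x : ι → E) :
    Matrix ι ι ℝ :=
  of fun i j => exp (-(s * dist (x i) (x j) ^ 2))

lemma tendsto_gaussianKernelMatrix_atTop {E ι : Type*} [MetricSpace E] [DecidableEq ι]
    {x : ι → E} (hx : x.Injective) :
    Tendsto (fun s => gaussianKernelMatrix s x) atTop (𝓝 1) := by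
  refine tendsto_pi_nhds.2 fun i => tendsto_pi_nhds.2 fun j => ?_
  rcases eq_or_ne i j with rfl | hij
  · simp [gaussianKernelMatrix]
  · have hd : 0 < dist (x i) (x j) ^ 2 := pow_pos (dist_pos.2 (hx.ne hij)) 2
    simp only [gaussianKernelMatrix, of_apply, one_apply_ne hij]
    exact tendsto_exp_atBot.comp (tendsto_neg_atTop_atBot.comp (tendsto_id.atTop_mul_const hd))

variable {E ι : Type*} [NormedAddCommGroup E] [InnerProductSpace ℝ E]

lemma gaussianKernelMatrix_eq_hadamard (s : ℝ) (x : ι → E) :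
    gaussianKernelMatrix s x =
      vecMulVec (fun i => exp (-(s * ‖x i‖ ^ 2))) (fun j => exp (-(s * ‖x j‖ ^ 2))) ⊙
        ((2 * s) • gram ℝ x).map exp := by
  ext i j
  simp only [gaussianKernelMatrix, of_apply, hadamard_apply, vecMulVec_apply, map_apply,
    Matrix.smul_apply, gram_apply, smul_eq_mul, dist_eq_norm, norm_sub_sq_real, ← exp_add]
  ring_nf

lemma posSemidef_gaussianKernelMatrix [Fintype ι] {s : ℝ} (hs : 0 ≤ s) (x : ι → E) :
    (gaussianKernelMatrix s x).PosSemidef := by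
  rw [gaussianKernelMatrix_eq_hadamard]
  exact (posSemidef_vecMulVec_self_star _).hadamard
    (((posSemidef_gram ℝ x).smul (by positivity)).map_exp)

end GaussianKernel

theorem Matrix.posDef_exp_neg_dist {E ι : Type*} [NormedAddCommGroup E] [InnerProductSpace ℝ E]
    [Fintype ι] {x : ι → E} (hx : x.Injective) :
    (of fun i j => exp (-dist (x i) (x j))).PosDef := by
  classical
  set F : ℝ → Matrix ι ι ℝ :=
    fun u => (2 / √π * exp (-u ^ 2)) • gaussianKernelMatrix (4 * u ^ 2)⁻¹ x
  have hF : ∀ i j, IntegrableOn (fun u => F u i j) (Ioi 0) := fun i j => by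
    simpa [F, gaussianKernelMatrix, mul_assoc] using
      ((integrable_exp_neg_sq_mul_exp_neg (dist (x i) (x j))).const_mul (2 / √π)).integrableOn
  have hZ : (of fun i j => exp (-dist (x i) (x j))) = of fun i j => ∫ u in Ioi 0, F u i j := by
    ext i j
    simp [F, gaussianKernelMatrix, exp_neg_eq_integral dist_nonneg, ← integral_const_mul, mul_assoc]
  have hF_psd : ∀ u, (F u).PosSemidef := fun u =>
    (posSemidef_gaussianKernelMatrix (by positivity) x).smul (by positivity)
  have hF_lim : Tendsto F (𝓝[>] 0) (𝓝 ((2 / √π) • 1)) := by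
    have : Tendsto (fun u : ℝ => 2 / √π * exp (-u ^ 2)) (𝓝[>] 0) (𝓝 (2 / √π)) :=
      ((by fun_prop : Continuous fun u : ℝ => 2 / √π * exp (-u ^ 2)).tendsto' 0 _
        (by simp)).mono_left nhdsWithin_le_nhds
    exact this.smul
      ((tendsto_gaussianKernelMatrix_atTop hx).comp tendsto_inv_four_mul_sq_nhdsGT_zero)
  refine .of_dotProduct_mulVec_pos ?_ fun v hv => ?_
  · ext i j
    simp [dist_comm]
  rw [star_trivial, hZ, dotProduct_mulVec_integral hF]
  refine setIntegral_Ioi_pos_of_tendsto_nhdsGT (integrable_dotProduct_mulVec hF v v)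
    (fun u _ => by simpa using (hF_psd u).dotProduct_mulVec_nonneg v)
    (((continuous_const.dotProduct (continuous_id.matrix_mulVec continuous_const)).tendsto _).comp
      hF_lim) ?_
  simpa [smul_mulVec] using mul_pos (by positivity) (dotProduct_star_self_pos_iff.2 hv)

theorem expNegDistMatrix_posDef_general (N n : ℕ)
    (x : Fin n → EuclideanSpace ℝ (Fin N)) (hx : Function.Injective x) :
    (Matrix.of fun i j : Fin n => Real.exp (-dist (x i) (x j))).PosDef ∧
      IsUnit (Matrix.of fun i j : Fin n => Real.exp (-dist (x i) (x j))) :=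
  have hZ := Matrix.posDef_exp_neg_dist hx
  ⟨hZ, hZ.isUnit⟩

/-- For pairwise distinct points `x₁, …, xₙ ∈ ℝ^N`, the symmetric matrix
`Z = (exp (−‖xᵢ − xⱼ‖))` is positive definite; in particular it is invertible. -/
theorem expNegDistMatrix_posDef (N n : ℕ) (hn : 1 ≤ n)
    (x : Fin n → EuclideanSpace ℝ (Fin N)) (hx : Function.Injective x) :
    (Matrix.of fun i j : Fin n => Real.exp (-dist (x i) (x j))).PosDef ∧
      IsUnit (Matrix.of fun i j : Fin n => Real.exp (-dist (x i) (x j))) :=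
  expNegDistMatrix_posDef_general N n x hx
end

section
/- For each fixed integer m ≥ 1, the sequence d ↦ s^{(m)}_d := Γ(d/2)^{m+1} / ( Γ((d+1)/2)^m · Γ((d−m)/2) ), defined for integers d > m, is monotonically increasing in d and converges to 1 as d → ∞. -/
open Filter

/-- The expected simplex skewness `s^{(m)}_d = Γ(d/2)^(m+1) / (Γ((d+1)/2)^m Γ((d−m)/2))`. -/
noncomputable def essSkewness (m d : ℕ) : ℝ :=
  Real.Gamma ((d : ℝ) / 2) ^ (m + 1) /
    (Real.Gamma (((d : ℝ) + 1) / 2) ^ m * Real.Gamma (((d : ℝ) - m) / 2))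

/-!
With `r x = Γ(x + 1/2) / Γ x`, the skewness is `∏_{k<m} r(d/2 - (k+1)/2) / r(d/2)`. Log-convexity of
`Γ` gives Gautschi's bounds `x²/(x + 1/2) ≤ r(x)² ≤ x`, so every factor tends to `1`. Passing from
`d` to `d + 1` multiplies the factor `r(y)/r(x)` by `ρ(y)/ρ(x)`, where `ρ t = r(t + 1/2)/r t` and
`x - y ∈ ½ℕ₊`; so monotonicity reduces to `ρ` decreasing along half-steps, i.e. to
`(x + 1/2) r(x)⁴ < x³`.
-/

open Real Finset Topology

lemma Real.Gamma_midpoint_sq_le {s t : ℝ} (hs : 0 < s) (ht : 0 < t) :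
    Gamma ((s + t) / 2) ^ 2 ≤ Gamma s * Gamma t := by
  have h := Gamma_mul_add_mul_le_rpow_Gamma_mul_rpow_Gamma hs ht one_half_pos one_half_pos
    (add_halves 1)
  rw [← mul_add, one_div_mul_eq_div, ← mul_rpow (Gamma_pos_of_pos hs).le
    (Gamma_pos_of_pos ht).le, ← sqrt_eq_rpow] at h
  exact (le_sqrt (Gamma_pos_of_pos (by positivity)).le
    (mul_pos (Gamma_pos_of_pos hs) (Gamma_pos_of_pos ht)).le).1 h

lemma tendsto_add_div_self_atTop (c : ℝ) : Tendsto (fun x : ℝ => (x + c) / x) atTop (𝓝 1) := by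
  have h : Tendsto (fun x : ℝ => 1 + c / x) atTop (𝓝 (1 + 0)) :=
    tendsto_const_nhds.add (tendsto_const_nhds.div_atTop tendsto_id)
  rw [add_zero] at h
  refine h.congr' ?_
  filter_upwards [eventually_gt_atTop 0] with x hx
  field_simp

noncomputable def gammaHalfRatio (x : ℝ) : ℝ := Gamma (x + 1 / 2) / Gamma x

section gammaHalfRatio

variable {x : ℝ}

lemma gammaHalfRatio_pos (hx : 0 < x) : 0 < gammaHalfRatio x :=
  div_pos (Gamma_pos_of_pos (by linarith)) (Gamma_pos_of_pos hx)

lemma gammaHalfRatio_mul_Gamma (hx : 0 < x) : gammaHalfRatio x * Gamma x = Gamma (x + 1 / 2) :=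
  div_mul_cancel₀ _ (Gamma_pos_of_pos hx).ne'

lemma gammaHalfRatio_mul_gammaHalfRatio_add_half (hx : 0 < x) :
    gammaHalfRatio x * gammaHalfRatio (x + 1 / 2) = x := by
  have hΓ := (Gamma_pos_of_pos hx).ne'
  rw [gammaHalfRatio, gammaHalfRatio, add_assoc, add_halves, Gamma_add_one hx.ne']
  field_simp

lemma gammaHalfRatio_add_one (hx : 0 < x) :
    gammaHalfRatio (x + 1) = (x + 1 / 2) / x * gammaHalfRatio x := by
  have hΓ := (Gamma_pos_of_pos hx).ne'
  rw [gammaHalfRatio, gammaHalfRatio, add_right_comm, Gamma_add_one hx.ne',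
    Gamma_add_one (by linarith)]
  field_simp

/-- With the next lemma, Gautschi's inequalities: log-convexity of `Γ` at the midpoints `x + 1/2`
and `x + 1`. -/
lemma gammaHalfRatio_sq_le (hx : 0 < x) : gammaHalfRatio x ^ 2 ≤ x := by
  have h := Gamma_midpoint_sq_le hx (show 0 < x + 1 by linarith)
  rw [show (x + (x + 1)) / 2 = x + 1 / 2 by ring, Gamma_add_one hx.ne'] at h
  have hΓ := Gamma_pos_of_pos hx
  rw [gammaHalfRatio, div_pow, div_le_iff₀ (by positivity)]
  linarith

lemma sq_le_add_half_mul_gammaHalfRatio_sq (hx : 0 < x) :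
    x ^ 2 ≤ (x + 1 / 2) * gammaHalfRatio x ^ 2 := by
  have h := Gamma_midpoint_sq_le (show 0 < x + 1 / 2 by linarith)
    (show 0 < x + 1 / 2 + 1 by linarith)
  rw [show (x + 1 / 2 + (x + 1 / 2 + 1)) / 2 = x + 1 by ring, Gamma_add_one hx.ne',
    Gamma_add_one (by linarith)] at h
  have hΓ := Gamma_pos_of_pos hx
  rw [gammaHalfRatio, div_pow, mul_div_assoc', le_div_iff₀ (by positivity)]
  nlinarith

lemma tendsto_gammaHalfRatio_sq_div_self :
    Tendsto (fun x => gammaHalfRatio x ^ 2 / x) atTop (𝓝 1) := by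
  have hlower := (tendsto_add_div_self_atTop (1 / 2)).inv₀ one_ne_zero
  rw [inv_one] at hlower
  refine tendsto_of_tendsto_of_tendsto_of_le_of_le' hlower tendsto_const_nhds ?_ ?_
  all_goals filter_upwards [eventually_gt_atTop 0] with x hx
  · rw [inv_div, div_le_div_iff₀ (by positivity) hx]
    nlinarith [sq_le_add_half_mul_gammaHalfRatio_sq hx]
  · exact (div_le_one hx).2 (gammaHalfRatio_sq_le hx)

/-- `q x = (x + 1/2) r(x)⁴ / x³` increases strictly under `x ↦ x + 1` and tends to `1`. -/
lemma add_half_mul_gammaHalfRatio_pow_four_lt (hx : 0 < x) :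
    (x + 1 / 2) * gammaHalfRatio x ^ 4 < x ^ 3 := by
  set q : ℝ → ℝ := fun y => (y + 1 / 2) * gammaHalfRatio y ^ 4 / y ^ 3
  have q_lt_add_one {y : ℝ} (hy : 0 < y) : q y < q (y + 1) := by
    have hr := gammaHalfRatio_pos hy
    simp only [q, gammaHalfRatio_add_one hy]
    rw [div_lt_div_iff₀ (by positivity) (by positivity)]
    field_simp
    nlinarith
  have q_tendsto : Tendsto q atTop (𝓝 1) := by
    have h := (tendsto_add_div_self_atTop (1 / 2)).mul (tendsto_gammaHalfRatio_sq_div_self.pow 2)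
    rw [one_pow, mul_one] at h
    refine h.congr' ?_
    filter_upwards [eventually_gt_atTop 0] with y hy
    simp only [q]
    field_simp
  have q_mono : Monotone fun n : ℕ => q (x + 1 + n) :=
    monotone_nat_of_le_succ fun n => by
      rw [Nat.cast_succ, ← add_assoc]
      exact (q_lt_add_one (by positivity)).le
  have q_le_one : q (x + 1) ≤ 1 := by
    simpa using q_mono.ge_of_tendsto (q_tendsto.comp (tendsto_atTop_add_const_left _ _
      tendsto_natCast_atTop_atTop)) 0
  have := (q_lt_add_one hx).trans_le q_le_one
  rwa [div_lt_one (by positivity)] at this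

lemma gammaHalfRatio_mul_gammaHalfRatio_add_one_lt_sq (hx : 0 < x) :
    gammaHalfRatio x * gammaHalfRatio (x + 1) < gammaHalfRatio (x + 1 / 2) ^ 2 := by
  have hr := gammaHalfRatio_pos hx
  have h := add_half_mul_gammaHalfRatio_pow_four_lt hx
  rw [gammaHalfRatio_add_one hx, eq_div_of_mul_eq hr.ne'
    ((mul_comm _ _).trans (gammaHalfRatio_mul_gammaHalfRatio_add_half hx))]
  rw [div_pow, lt_div_iff₀ (by positivity)]
  field_simp
  linarith

lemma strictAnti_gammaHalfRatio_add_half_div (hx : 0 < x) :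
    StrictAnti fun n : ℕ => gammaHalfRatio (x + n / 2 + 1 / 2) / gammaHalfRatio (x + n / 2) := by
  refine strictAnti_nat_of_succ_lt fun n => ?_
  have hz : 0 < x + n / 2 := by positivity
  have h := gammaHalfRatio_mul_gammaHalfRatio_add_one_lt_sq hz
  have hr := gammaHalfRatio_pos hz
  have hr' := gammaHalfRatio_pos (show 0 < x + n / 2 + 1 / 2 by positivity)
  rw [Nat.cast_add_one, add_div (n : ℝ), ← add_assoc, add_assoc _ (1 / 2) (1 / 2), add_halves,
    div_lt_div_iff₀ hr' hr]
  linarith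

lemma gammaHalfRatio_sub_div_lt_add_half (k : ℕ) (hx : (k + 1) / 2 < x) :
    gammaHalfRatio (x - (k + 1) / 2) / gammaHalfRatio x <
      gammaHalfRatio (x + 1 / 2 - (k + 1) / 2) / gammaHalfRatio (x + 1 / 2) := by
  have hy : 0 < x - (k + 1) / 2 := by linarith
  have hx₀ : 0 < x := hy.trans_le (sub_le_self _ (by positivity))
  have h := strictAnti_gammaHalfRatio_add_half_div hy k.succ_pos
  simp only [Nat.cast_add_one, CharP.cast_eq_zero, zero_div, add_zero, sub_add_cancel,
    sub_add_eq_add_sub] at h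
  rw [div_lt_div_iff₀ (gammaHalfRatio_pos hx₀) (gammaHalfRatio_pos hy)] at h
  rw [div_lt_div_iff₀ (gammaHalfRatio_pos hx₀) (gammaHalfRatio_pos (by linarith))]
  linarith

lemma tendsto_gammaHalfRatio_sub_div (c : ℝ) :
    Tendsto (fun x => gammaHalfRatio (x - c) / gammaHalfRatio x) atTop (𝓝 1) := by
  have hsub : Tendsto (fun x : ℝ => x - c) atTop atTop :=
    tendsto_atTop_add_const_right _ _ tendsto_id
  have hsq : Tendsto (fun x => gammaHalfRatio (x - c) ^ 2 / (x - c) * ((x - c) / x) /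
      (gammaHalfRatio x ^ 2 / x)) atTop (𝓝 (1 * 1 / 1)) :=
    ((tendsto_gammaHalfRatio_sq_div_self.comp hsub).mul
      (by simpa [sub_eq_add_neg] using tendsto_add_div_self_atTop (-c))).div
      tendsto_gammaHalfRatio_sq_div_self one_ne_zero
  rw [mul_one, div_one] at hsq
  have hsqrt := hsq.sqrt
  rw [sqrt_one] at hsqrt
  refine hsqrt.congr' ?_
  filter_upwards [eventually_gt_atTop c, eventually_gt_atTop 0] with x hxc hx
  have hy : 0 < x - c := sub_pos.2 hxc
  have hr := gammaHalfRatio_pos hx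
  rw [← sqrt_sq (div_pos (gammaHalfRatio_pos hy) hr).le]
  congr 1
  field_simp

end gammaHalfRatio

lemma Gamma_eq_Gamma_sub_mul_prod_gammaHalfRatio {x : ℝ} (m : ℕ) (hx : m / 2 < x) :
    Gamma x = Gamma (x - m / 2) * ∏ k ∈ range m, gammaHalfRatio (x - (k + 1) / 2) := by
  induction m with
  | zero => simp
  | succ m ih =>
    push_cast at hx ⊢
    have hpos : 0 < x - (m + 1) / 2 := by linarith
    rw [ih (by linarith), prod_range_succ, show x - m / 2 = x - (m + 1) / 2 + 1 / 2 by ring,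
      ← gammaHalfRatio_mul_Gamma hpos]
    ring

lemma essSkewness_eq_prod {m d : ℕ} (hd : m < d) :
    essSkewness m d =
      ∏ k ∈ range m, gammaHalfRatio (d / 2 - (k + 1) / 2) / gammaHalfRatio (d / 2) := by
  have hmd : (m : ℝ) < d := by exact_mod_cast hd
  have hx : (0 : ℝ) < d / 2 := by linarith [(Nat.cast_nonneg m : (0 : ℝ) ≤ m)]
  have hΓ := Gamma_eq_Gamma_sub_mul_prod_gammaHalfRatio m (show (m : ℝ) / 2 < d / 2 by linarith)
  have hr := gammaHalfRatio_pos hx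
  have hΓx := Gamma_pos_of_pos hx
  have hΓxm := Gamma_pos_of_pos (show (0 : ℝ) < (d - m) / 2 by linarith)
  rw [prod_div_distrib, prod_const, card_range, essSkewness, div_eq_div_iff (by positivity)
    (by positivity), add_div, ← gammaHalfRatio_mul_Gamma hx, sub_div]
  linear_combination (Gamma ((d : ℝ) / 2) ^ m * gammaHalfRatio ((d : ℝ) / 2) ^ m) * hΓ

lemma essSkewness_lt_add_one {m d : ℕ} (hm : 0 < m) (hd : m < d) :
    essSkewness m d < essSkewness m (d + 1) := by
  rw [essSkewness_eq_prod hd, essSkewness_eq_prod (hd.trans (lt_add_one d))]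
  refine prod_lt_prod_of_nonempty (fun k hk => ?_) (fun k hk => ?_) (nonempty_range_iff.2 hm.ne')
  all_goals
    have hkd : ((k : ℝ) + 1) / 2 < d / 2 := by
      have := mem_range.1 hk
      have : (k : ℝ) + 1 < d := by exact_mod_cast (show k + 1 < d by omega)
      linarith
    have hk₀ : (0 : ℝ) < ((k : ℝ) + 1) / 2 := by positivity
  · exact div_pos (gammaHalfRatio_pos (by linarith)) (gammaHalfRatio_pos (by linarith))
  · rw [Nat.cast_add_one, add_div (d : ℝ)]
    exact gammaHalfRatio_sub_div_lt_add_half k hkd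

/-- For each fixed `m ≥ 1`, the sequence `d ↦ s^{(m)}_d` (defined for integers `d > m`) is
monotonically increasing in `d` and converges to `1` as `d → ∞`. -/
theorem essSkewness_mono_tendsto_one (m : ℕ) (hm : 1 ≤ m) :
    StrictMonoOn (fun d : ℕ => essSkewness m d) {d : ℕ | m < d} ∧
      Tendsto (fun d : ℕ => essSkewness m d) atTop (nhds 1) := by
  constructor
  · refine strictMonoOn_of_lt_succ Set.ordConnected_Ioi fun d _ hd _ => ?_
    rw [Order.succ_eq_add_one]
    exact essSkewness_lt_add_one hm hd
  · have h := tendsto_finsetProd (range m) fun k _ => (tendsto_gammaHalfRatio_sub_div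
      (((k : ℝ) + 1) / 2)).comp (tendsto_natCast_atTop_atTop.atTop_div_const two_pos)
    rw [prod_const_one] at h
    refine h.congr' ?_
    filter_upwards [eventually_gt_atTop m] with d hd
    exact (essSkewness_eq_prod hd).symm
end

section
/- Let d ≥ 1 be an integer and let p, q ∈ ℝ^d with ‖p − q‖ = 1. Then the ratio of the Lebesgue volume of the intersection of the two closed unit balls centred at p and q to the volume of a single unit ball is vol(B(p,1) ∩ B(q,1)) / vol(B(p,1)) = I_{3/4}((d+1)/2, 1/2), where I_x(a, b) = ( ∫₀^x t^{a−1}(1−t)^{b−1} dt ) / ( ∫₀^1 t^{a−1}(1−t)^{b−1} dt ) is the regularized incomplete beta function. -/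
/-!
After an isometry the centres are `0` and `e₀`, and both bodies are solids of revolution about
the first axis. Slicing perpendicular to it (Cavalieri) writes each volume as the volume of the unit
`(d-1)`-ball times `∫ (1 - t²)^((d-1)/2) dt`: over `[-1, 1]` for the ball and, by the symmetry
`t ↦ 1 - t` of the lens, twice the integral over `[1/2, 1]` for the intersection. The substitution
`t = 1 - s²` turns these into the incomplete beta integrals up to `1` and `3/4`.
-/

open Metric MeasureTheory

/-- The regularized incomplete beta function
`I_x(a, b) = (∫₀ˣ t^(a−1) (1−t)^(b−1) dt) / (∫₀¹ t^(a−1) (1−t)^(b−1) dt)`. -/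
noncomputable def regIncompleteBeta (x a b : ℝ) : ℝ :=
  (∫ t in (0 : ℝ)..x, t ^ (a - 1) * (1 - t) ^ (b - 1)) /
    (∫ t in (0 : ℝ)..1, t ^ (a - 1) * (1 - t) ^ (b - 1))

open Set

variable {E : Type*} [NormedAddCommGroup E] [InnerProductSpace ℝ E] [FiniteDimensional ℝ E]
  [MeasurableSpace E] [BorelSpace E] in
/-- A reflection followed by a translation maps `(p, q)` to `(p', q')` isometrically. -/
theorem volume_inter_closedBall_congr {p q p' q' : E} (h : dist p q = dist p' q') (r s : ℝ) :
    volume (closedBall p r ∩ closedBall q s) = volume (closedBall p' r ∩ closedBall q' s) := by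
  let R := Submodule.reflection (ℝ ∙ ((q - p) - (q' - p')))ᗮ
  have hR : R (q - p) = q' - p' :=
    Submodule.reflection_sub (by rwa [← dist_eq_norm', ← dist_eq_norm'])
  let g : E → E := fun x => R (x - p) + p'
  have hg : MeasurePreserving g := (measurePreserving_add_right volume p').comp
    (R.measurePreserving.comp (measurePreserving_sub_right volume p))
  have hg_isometry : Isometry g :=
    Isometry.of_dist_eq fun x y => by simp [g, dist_eq_norm, ← map_sub]
  have hp : g p = p' := by simp [g]
  have hq : g q = q' := by simp only [g, hR, sub_add_cancel]
  have hpre : g ⁻¹' (closedBall p' r ∩ closedBall q' s) = closedBall p r ∩ closedBall q s := by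
    rw [preimage_inter, ← hg_isometry.preimage_closedBall p, ← hg_isometry.preimage_closedBall q,
      hp, hq]
  rw [← hpre, hg.measure_preimage
    (measurableSet_closedBall.inter measurableSet_closedBall).nullMeasurableSet]

section Slicing

variable (n : ℕ)

theorem Continuous.rpow_natCast_div_two {m : ℝ → ℝ} (hm : Continuous m) :
    Continuous fun t => m t ^ ((n : ℝ) / 2) :=
  hm.rpow_const fun _ => Or.inr (by positivity)

theorem volume_setOf_sum_sq_le {r : ℝ} (hr : 0 ≤ r) :
    volume {y : Fin n → ℝ | ∑ j, y j ^ 2 ≤ r} =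
      ENNReal.ofReal (r ^ ((n : ℝ) / 2)) *
        volume (closedBall (0 : EuclideanSpace ℝ (Fin n)) 1) := by
  have hball : (MeasurableEquiv.toLp 2 (Fin n → ℝ)).symm ⁻¹' {y | ∑ j, y j ^ 2 ≤ r} =
      closedBall (0 : EuclideanSpace ℝ (Fin n)) √r := by
    ext z
    simp only [mem_preimage, mem_ofPred_eq, mem_closedBall, dist_zero_right,
      EuclideanSpace.norm_eq, MeasurableEquiv.coe_toLp_symm, Real.norm_eq_abs, sq_abs]
    exact (Real.sqrt_le_sqrt_iff hr).symm
  rw [← (EuclideanSpace.volume_preserving_symm_measurableEquiv_toLp (Fin n)).measure_preimage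
    (measurableSet_le (by fun_prop) measurable_const).nullMeasurableSet, hball,
    Measure.addHaar_closedBall' _ _ (Real.sqrt_nonneg _), finrank_euclideanSpace_fin,
    Real.sqrt_eq_rpow, ← Real.rpow_mul_natCast hr]
  ring_nf

/-- Cavalieri's principle for a body of revolution about the first axis with squared profile
`m`: each slice is an `n`-ball of radius `√(m t)`. -/
theorem volume_setOf_sum_sq_succ_le (m : ℝ → ℝ) (hm : Continuous m) {a b : ℝ} (hab : a ≤ b)
    (hm_nonneg : ∀ t, 0 ≤ m t ↔ t ∈ Icc a b) :
    volume {x : EuclideanSpace ℝ (Fin (n + 1)) | ∑ j : Fin n, x j.succ ^ 2 ≤ m (x 0)} =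
      ENNReal.ofReal (∫ t in a..b, m t ^ ((n : ℝ) / 2)) *
        volume (closedBall (0 : EuclideanSpace ℝ (Fin n)) 1) := by
  set V := volume (closedBall (0 : EuclideanSpace ℝ (Fin n)) 1)
  let S : Set (ℝ × (Fin n → ℝ)) := {p | ∑ j, p.2 j ^ 2 ≤ m p.1}
  have hS : MeasurableSet S := measurableSet_le (by fun_prop) (hm.measurable.comp measurable_fst)
  let e := (MeasurableEquiv.toLp 2 (Fin (n + 1) → ℝ)).symm.trans
    (MeasurableEquiv.piFinSuccAbove (fun _ => ℝ) 0)
  have he : MeasurePreserving e :=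
    (volume_preserving_piFinSuccAbove (fun _ => ℝ) 0).comp
      (EuclideanSpace.volume_preserving_symm_measurableEquiv_toLp (Fin (n + 1)))
  have hslice : ∀ t, volume (Prod.mk t ⁻¹' S) =
      (Icc a b).indicator (fun t => ENNReal.ofReal (m t ^ ((n : ℝ) / 2)) * V) t := by
    intro t
    by_cases ht : 0 ≤ m t
    · rw [indicator_of_mem ((hm_nonneg t).1 ht)]
      exact volume_setOf_sum_sq_le n ht
    · rw [indicator_of_notMem (mt (hm_nonneg t).2 ht)]
      refine measure_mono_null (fun y hy => ?_) measure_empty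
      exact ht ((Finset.sum_nonneg fun j _ => sq_nonneg (y j)).trans hy)
  have hint : IntegrableOn (fun t => m t ^ ((n : ℝ) / 2)) (Icc a b) :=
    (hm.rpow_natCast_div_two n).integrableOn_Icc
  calc volume {x : EuclideanSpace ℝ (Fin (n + 1)) | ∑ j : Fin n, x j.succ ^ 2 ≤ m (x 0)}
      = volume S := he.measure_preimage hS.nullMeasurableSet
    _ = ∫⁻ t in Icc a b, ENNReal.ofReal (m t ^ ((n : ℝ) / 2)) * V := by
      rw [Measure.volume_eq_prod, Measure.prod_apply hS, ← lintegral_indicator measurableSet_Icc]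
      exact lintegral_congr hslice
    _ = ENNReal.ofReal (∫ t in a..b, m t ^ ((n : ℝ) / 2)) * V := by
      rw [lintegral_mul_const' _ _ measure_closedBall_lt_top.ne,
        intervalIntegral.integral_of_le hab, ← integral_Icc_eq_integral_Ioc,
        ofReal_integral_eq_lintegral_ofReal hint]
      exact (ae_restrict_iff' measurableSet_Icc).2 (.of_forall fun t ht =>
        Real.rpow_nonneg ((hm_nonneg t).2 ht) _)

theorem mem_closedBall_iff_sum_sq_succ_le {x c : EuclideanSpace ℝ (Fin (n + 1))} {r : ℝ}
    (hr : 0 ≤ r) :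
    x ∈ closedBall c r ↔ ∑ j : Fin n, (x j.succ - c j.succ) ^ 2 ≤ r ^ 2 - (x 0 - c 0) ^ 2 := by
  rw [mem_closedBall, EuclideanSpace.dist_eq, Real.sqrt_le_left hr, Fin.sum_univ_succ]
  simp only [Real.dist_eq, sq_abs]
  constructor <;> intro h <;> linarith

end Slicing

theorem integral_eq_two_mul_integral_of_symm {f : ℝ → ℝ} (hf : Continuous f) {c : ℝ}
    (hsymm : ∀ t, f (c - t) = f t) (a : ℝ) :
    ∫ t in a..c - a, f t = 2 * ∫ t in c / 2..c - a, f t := by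
  have hleft : ∫ t in a..c / 2, f t = ∫ t in c / 2..c - a, f t :=
    calc ∫ t in a..c / 2, f t = ∫ t in a..c / 2, f (c - t) := by simp only [hsymm]
      _ = ∫ t in c / 2..c - a, f t := by
        rw [intervalIntegral.integral_comp_sub_left, show c - c / 2 = c / 2 by ring]
  rw [← intervalIntegral.integral_add_adjacent_intervals (b := c / 2) (hf.intervalIntegrable _ _)
    (hf.intervalIntegrable _ _), hleft, two_mul]

section UnitBalls

variable (n : ℕ)

theorem volume_closedBall_zero_one_succ :
    volume (closedBall (0 : EuclideanSpace ℝ (Fin (n + 1))) 1) =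
      ENNReal.ofReal (2 * ∫ t in (0 : ℝ)..1, (1 - t ^ 2) ^ ((n : ℝ) / 2)) *
        volume (closedBall (0 : EuclideanSpace ℝ (Fin n)) 1) := by
  have hball : closedBall (0 : EuclideanSpace ℝ (Fin (n + 1))) 1 =
      {x | ∑ j : Fin n, x j.succ ^ 2 ≤ 1 - x 0 ^ 2} := by
    ext x
    simp [mem_closedBall_iff_sum_sq_succ_le n zero_le_one]
  have hprofile (t : ℝ) : 0 ≤ 1 - t ^ 2 ↔ t ∈ Icc (-1) 1 := by
    rw [sub_nonneg, sq_le_one_iff_abs_le_one, abs_le, mem_Icc]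
  have hm : Continuous fun t : ℝ => 1 - t ^ 2 := by fun_prop
  have hsymm := integral_eq_two_mul_integral_of_symm (hm.rpow_natCast_div_two n)
    (c := 0) (fun t => by simp) (-1)
  norm_num at hsymm
  rw [hball, volume_setOf_sum_sq_succ_le n _ hm (by norm_num) hprofile, hsymm]

theorem volume_closedBall_inter_closedBall_single :
    volume (closedBall (0 : EuclideanSpace ℝ (Fin (n + 1))) 1 ∩
        closedBall (EuclideanSpace.single 0 1) 1) =
      ENNReal.ofReal (2 * ∫ t in (1 / 2 : ℝ)..1, (1 - t ^ 2) ^ ((n : ℝ) / 2)) *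
        volume (closedBall (0 : EuclideanSpace ℝ (Fin n)) 1) := by
  let m : ℝ → ℝ := fun t => min (1 - t ^ 2) (1 - (t - 1) ^ 2)
  have hlens : closedBall (0 : EuclideanSpace ℝ (Fin (n + 1))) 1 ∩
      closedBall (EuclideanSpace.single 0 1) 1 = {x | ∑ j : Fin n, x j.succ ^ 2 ≤ m (x 0)} := by
    ext x
    simp [m, mem_closedBall_iff_sum_sq_succ_le n zero_le_one, Fin.succ_ne_zero]
  have hprofile (t : ℝ) : 0 ≤ m t ↔ t ∈ Icc 0 1 := by
    simp only [m, le_min_iff, mem_Icc]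
    constructor <;> rintro ⟨h₁, h₂⟩ <;> constructor <;> nlinarith
  have hm : Continuous m := by fun_prop
  have hsymm := integral_eq_two_mul_integral_of_symm
    (hm.rpow_natCast_div_two n) (c := 1)
    (fun t => by simp only [m]; ring_nf; rw [min_comm]) 0
  have hcap : ∫ t in (1 / 2 : ℝ)..1, m t ^ ((n : ℝ) / 2) =
      ∫ t in (1 / 2 : ℝ)..1, (1 - t ^ 2) ^ ((n : ℝ) / 2) := by
    refine intervalIntegral.integral_congr fun t ht => ?_
    rw [uIcc_of_le (by norm_num)] at ht
    simp only [m, min_eq_left (by nlinarith [ht.1] : 1 - t ^ 2 ≤ 1 - (t - 1) ^ 2)]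
  norm_num at hsymm
  rw [hlens, volume_setOf_sum_sq_succ_le n m hm zero_le_one hprofile, hsymm, hcap]

end UnitBalls

theorem image_one_sub_sq_Ioc_sqrt_one_sub {x : ℝ} (hx : x ≤ 1) :
    (fun s : ℝ => 1 - s ^ 2) '' Ioc √(1 - x) 1 = Ico 0 x := by
  ext t
  constructor
  · rintro ⟨s, ⟨hs₁, hs₂⟩, rfl⟩
    have hs₀ : 0 < s := (Real.sqrt_nonneg _).trans_lt hs₁
    have : 1 - x < s ^ 2 := by rwa [Real.sqrt_lt' hs₀] at hs₁
    exact ⟨by nlinarith, by linarith⟩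
  · rintro ⟨ht₀, htx⟩
    refine ⟨√(1 - t), ⟨Real.sqrt_lt_sqrt (by linarith) (by linarith), ?_⟩, ?_⟩
    · exact Real.sqrt_le_one.mpr (by linarith)
    · simp only [Real.sq_sqrt (by linarith : (0 : ℝ) ≤ 1 - t), sub_sub_cancel]

/-- The substitution `t = 1 - s²`; no integrability is needed, since the one-dimensional change of
variables formula holds for arbitrary integrands. -/
theorem integral_rpow_mul_one_sub_rpow_neg_half {x : ℝ} (hx₀ : 0 ≤ x) (hx₁ : x ≤ 1) (c : ℝ) :
    ∫ t in (0 : ℝ)..x, t ^ c * (1 - t) ^ (-(1 / 2) : ℝ) =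
      2 * ∫ s in √(1 - x)..1, (1 - s ^ 2) ^ c := by
  have hderiv : ∀ s ∈ Ioc √(1 - x) 1,
      HasDerivWithinAt (fun s : ℝ => 1 - s ^ 2) (-(2 * s)) (Ioc √(1 - x) 1) s := fun s _ => by
    simpa using ((hasDerivAt_pow 2 s).const_sub 1).hasDerivWithinAt
  have hinj : InjOn (fun s : ℝ => 1 - s ^ 2) (Ioc √(1 - x) 1) := by
    intro s hs t ht hst
    have h₀ : ∀ u ∈ Ioc √(1 - x) 1, 0 ≤ u := fun u hu => (Real.sqrt_nonneg _).trans hu.1.le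
    exact (pow_left_inj₀ (h₀ s hs) (h₀ t ht) two_ne_zero).mp (by simpa using hst)
  have hcov := integral_image_eq_integral_abs_deriv_smul measurableSet_Ioc hderiv hinj
    (fun t : ℝ => t ^ c * (1 - t) ^ (-(1 / 2) : ℝ))
  rw [image_one_sub_sq_Ioc_sqrt_one_sub hx₁] at hcov
  rw [intervalIntegral.integral_of_le hx₀, integral_Ioc_eq_integral_Ioo,
    ← integral_Ico_eq_integral_Ioo, hcov,
    intervalIntegral.integral_of_le (Real.sqrt_le_one.mpr (by linarith)), ← integral_const_mul]
  refine setIntegral_congr_fun measurableSet_Ioc fun s hs => ?_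
  have hs₀ : 0 < s := (Real.sqrt_nonneg _).trans_lt hs.1
  have hinv : (s ^ 2) ^ (-(1 / 2) : ℝ) = s⁻¹ := by
    rw [Real.rpow_neg (by positivity), ← Real.sqrt_eq_rpow, Real.sqrt_sq hs₀.le]
  simp only [sub_sub_cancel, hinv, smul_eq_mul, abs_neg, abs_of_pos (by positivity : 0 < 2 * s)]
  field_simp

theorem regIncompleteBeta_three_quarters_add_one_half (c : ℝ) :
    regIncompleteBeta (3 / 4) (c + 1) (1 / 2) =
      (∫ s in (1 / 2 : ℝ)..1, (1 - s ^ 2) ^ c) / ∫ s in (0 : ℝ)..1, (1 - s ^ 2) ^ c := by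
  rw [regIncompleteBeta, add_sub_cancel_right, show (1 / 2 : ℝ) - 1 = -(1 / 2) by norm_num,
    integral_rpow_mul_one_sub_rpow_neg_half (by norm_num) (by norm_num),
    integral_rpow_mul_one_sub_rpow_neg_half zero_le_one le_rfl,
    show (1 : ℝ) - 3 / 4 = (1 / 2) ^ 2 by norm_num, Real.sqrt_sq (by norm_num), sub_self,
    Real.sqrt_zero, mul_div_mul_left _ _ two_ne_zero]

theorem volume_inter_unitBalls_ratio_general (d : ℕ)
    (p q : EuclideanSpace ℝ (Fin d)) (hpq : dist p q = 1) :
    (volume (closedBall p 1 ∩ closedBall q 1)).toReal /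
        (volume (closedBall p 1)).toReal =
      regIncompleteBeta (3 / 4) (((d : ℝ) + 1) / 2) (1 / 2) := by
  obtain ⟨n, rfl⟩ : ∃ n, d = n + 1 := Nat.exists_eq_succ_of_ne_zero <| by
    rintro rfl
    simp [Subsingleton.elim p q] at hpq
  have hdist :
      dist p q = dist (0 : EuclideanSpace ℝ (Fin (n + 1))) (EuclideanSpace.single 0 1) := by
    rw [hpq, dist_zero_left, PiLp.norm_single, norm_one]
  rw [volume_inter_closedBall_congr hdist, Measure.addHaar_closedBall_center,
    volume_closedBall_inter_closedBall_single, volume_closedBall_zero_one_succ,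
    show ((↑(n + 1) : ℝ) + 1) / 2 = n / 2 + 1 by push_cast; ring,
    regIncompleteBeta_three_quarters_add_one_half]
  have hV : (volume (closedBall (0 : EuclideanSpace ℝ (Fin n)) 1)).toReal ≠ 0 :=
    ENNReal.toReal_ne_zero.mpr
      ⟨(measure_closedBall_pos _ _ one_pos).ne', measure_closedBall_lt_top.ne⟩
  have hnonneg (a : ℝ) (ha : a ∈ Icc 0 1) : 0 ≤ 2 * ∫ t in a..1, (1 - t ^ 2) ^ ((n : ℝ) / 2) :=
    mul_nonneg zero_le_two <| intervalIntegral.integral_nonneg ha.2 fun t ht =>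
      Real.rpow_nonneg (by nlinarith [ha.1, ht.1, ht.2]) _
  rw [ENNReal.toReal_mul, ENNReal.toReal_mul, ENNReal.toReal_ofReal (hnonneg _ (by norm_num)),
    ENNReal.toReal_ofReal (hnonneg _ (by norm_num)), mul_div_mul_right _ _ hV,
    mul_div_mul_left _ _ two_ne_zero]

/-- For `p, q ∈ ℝ^d` with `‖p − q‖ = 1`, the ratio of the volume of the intersection of the
two closed unit balls centred at `p` and `q` to the volume of a single unit ball equals
`I_{3/4}((d+1)/2, 1/2)`. -/
theorem volume_inter_unitBalls_ratio (d : ℕ) (hd : 1 ≤ d)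
    (p q : EuclideanSpace ℝ (Fin d)) (hpq : dist p q = 1) :
    (volume (closedBall p 1 ∩ closedBall q 1)).toReal /
        (volume (closedBall p 1)).toReal =
      regIncompleteBeta (3 / 4) (((d : ℝ) + 1) / 2) (1 / 2) :=
  volume_inter_unitBalls_ratio_general d p q hpq
end
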